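/- Let X be a finite nonempty set and let H₀ be a hierarchy on X that contains all trivial clusters of X. Then the collection C = {C ⊆ X : C ≠ ∅ and for every C' ∈ H₀, C ∩ C' ∈ {∅, C, C'}} of all nonempty subsets of X compatible with every member of H₀ is bureaucratic. -/

import Mathlib

def IsHierarchy {α : Type*} [Fintype α] [DecidableEq α] (H : Finset (Finset α)) : Prop :=
  ∅ ∉ H ∧ Finset.univ ∈ H ∧
    ∀ A ∈ H, ∀ B ∈ H, A ∩ B = ∅ ∨ A ∩ B = A ∨ A ∩ B = B

def IsMaximumHierarchy {α : Type*} [Fintype α] [DecidableEq α] (H : Finset (Finset α)) : Prop :=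
  IsHierarchy H ∧ H.card = 2 * Fintype.card α - 1

def IsBureaucratic {α : Type*} [Fintype α] [DecidableEq α] (C : Set (Finset α)) : Prop :=
  C.Nonempty ∧ ∅ ∉ C ∧
    ∀ H : Finset (Finset α), ↑H ⊆ C → IsHierarchy H →
      ∃ H' : Finset (Finset α), H ⊆ H' ∧ ↑H' ⊆ C ∧ IsMaximumHierarchy H'

/-!
Adjoining `H₀` to a hierarchy `H ⊆ C` gives a hierarchy, and every inclusion-maximal hierarchy
`K` containing it lies in `C`. Maximality puts every singleton into `K` and gives every other
cluster `D ∈ K` exactly two children (maximal proper subclusters): at least two because the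
children cover `D`, at most two because otherwise the union of two of them could be added to `K`.
Every cluster but `X` has exactly one parent, so `|K| - 1 = 2 (|K| - |X|)`, i.e. `|K| = 2|X| - 1`.
-/

open Finset

section Compatible

variable {α : Type*} [DecidableEq α] {A B : Finset α}

def Compatible (A B : Finset α) : Prop :=
  A ∩ B = ∅ ∨ A ∩ B = A ∨ A ∩ B = B

theorem compatible_iff : Compatible A B ↔ Disjoint A B ∨ A ⊆ B ∨ B ⊆ A := by
  simp only [Compatible, disjoint_iff_inter_eq_empty, inter_eq_left, inter_eq_right]

theorem Compatible.symm (h : Compatible A B) : Compatible B A := by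
  rw [compatible_iff, disjoint_comm] at *
  tauto

theorem compatible_self (A : Finset α) : Compatible A A :=
  Or.inr (Or.inl (inter_self A))

theorem compatible_singleton (x : α) (B : Finset α) : Compatible {x} B := by
  rw [compatible_iff]
  by_cases hx : x ∈ B
  · exact Or.inr (Or.inl (singleton_subset_iff.2 hx))
  · exact Or.inl (disjoint_singleton_left.2 hx)

end Compatible

section Children

variable {α : Type*} {K : Finset (Finset α)} {A D D' : Finset α}

def IsChild (K : Finset (Finset α)) (A D : Finset α) : Prop :=
  A ⊂ D ∧ ∀ E ∈ K, A ⊂ E → D ⊆ E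

open Classical in
noncomputable def children (K : Finset (Finset α)) (D : Finset α) : Finset (Finset α) :=
  {A ∈ K | IsChild K A D}

theorem mem_children : A ∈ children K D ↔ A ∈ K ∧ IsChild K A D := by
  classical
  simp [children]

theorem IsChild.unique (h : IsChild K A D) (h' : IsChild K A D') (hD : D ∈ K) (hD' : D' ∈ K) :
    D = D' :=
  subset_antisymm (h.2 D' hD' h'.1) (h'.2 D hD h.1)

end Children

namespace IsHierarchy

variable {α : Type*} [Fintype α] [DecidableEq α] {K L : Finset (Finset α)} {A B C D E : Finset α}

theorem compatible (hK : IsHierarchy K) (hA : A ∈ K) (hB : B ∈ K) : Compatible A B :=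
  hK.2.2 A hA B hB

theorem nonempty_of_mem (hK : IsHierarchy K) (hA : A ∈ K) : A.Nonempty :=
  nonempty_iff_ne_empty.2 fun h => hK.1 (h ▸ hA)

theorem subset_or_subset_of_subset_inter (hK : IsHierarchy K) (hA : A ∈ K) (hB : B ∈ K)
    (hC : C ∈ K) (h : C ⊆ A ∩ B) : A ⊆ B ∨ B ⊆ A := by
  obtain ⟨x, hx⟩ := hK.nonempty_of_mem hC
  refine (compatible_iff.1 (hK.compatible hA hB)).resolve_left fun hAB => ?_
  exact disjoint_left.1 hAB (mem_inter.1 (h hx)).1 (mem_inter.1 (h hx)).2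

theorem union (hK : IsHierarchy K) (hL : ∅ ∉ L) (hLL : ∀ A ∈ L, ∀ B ∈ L, Compatible A B)
    (hLK : ∀ A ∈ L, ∀ B ∈ K, Compatible A B) : IsHierarchy (L ∪ K) := by
  refine ⟨by simp [hL, hK.1], mem_union_right L hK.2.1, ?_⟩
  simp only [mem_union]
  rintro A (hA | hA) B (hB | hB)
  · exact hLL A hA B hB
  · exact hLK A hA B hB
  · exact (hLK B hB A hA).symm
  · exact hK.2.2 A hA B hB

theorem insert (hK : IsHierarchy K) (hB : B ≠ ∅) (h : ∀ E ∈ K, Compatible B E) :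
    IsHierarchy (insert B K) := by
  rw [insert_eq]
  exact hK.union (by simpa using hB.symm) (by simpa using compatible_self B) (by simpa using h)

theorem exists_isChild (hK : IsHierarchy K) (hA : A ∈ K) (hAu : A ≠ univ) :
    ∃ D ∈ K, IsChild K A D := by
  obtain ⟨D, hD, hmin⟩ := {D ∈ K | A ⊂ D}.exists_min_image card
    ⟨univ, mem_filter.2 ⟨hK.2.1, ssubset_univ_iff.2 hAu⟩⟩
  rw [mem_filter] at hD
  refine ⟨D, hD.1, hD.2, fun E hE hAE => ?_⟩
  rcases hK.subset_or_subset_of_subset_inter hD.1 hE hA (subset_inter hD.2.le hAE.le) with h | h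
  · exact h
  · exact (eq_of_subset_of_card_le h (hmin E (mem_filter.2 ⟨hE, hAE⟩))).ge

theorem card_erase_univ (hK : IsHierarchy K) :
    #(K.erase univ) = ∑ D ∈ K, #(children K D) := by
  rw [← card_biUnion]
  · congr 1
    ext A
    simp only [mem_erase, mem_biUnion, mem_children]
    constructor
    · rintro ⟨hAu, hA⟩
      obtain ⟨D, hD, hAD⟩ := hK.exists_isChild hA hAu
      exact ⟨D, hD, hA, hAD⟩
    · rintro ⟨D, -, hA, hAD⟩
      exact ⟨ssubset_univ_iff.1 (hAD.1.trans_le (subset_univ D)), hA⟩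
  · intro D hD D' hD' hne
    refine disjoint_left.2 fun A hA hA' => hne ?_
    exact (mem_children.1 hA).2.unique (mem_children.1 hA').2 hD hD'

theorem children_eq_empty_of_card_le_one (hK : IsHierarchy K) (hD : #D ≤ 1) :
    children K D = ∅ := by
  refine eq_empty_iff_forall_notMem.2 fun A hA => ?_
  rw [mem_children] at hA
  have hApos := (hK.nonempty_of_mem hA.1).card_pos
  have hAD := card_lt_card hA.2.1
  omega

theorem exists_child_superset (hK : IsHierarchy K) (hA : A ∈ K) (hD : D ∈ K) (hAD : A ⊂ D) :
    ∃ C ∈ children K D, A ⊆ C := by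
  obtain ⟨C, hC, hmax⟩ := {C ∈ K | A ⊆ C ∧ C ⊂ D}.exists_max_image card
    ⟨A, mem_filter.2 ⟨hA, subset_rfl, hAD⟩⟩
  obtain ⟨hCK, hAC, hCD⟩ := mem_filter.1 hC
  refine ⟨C, mem_children.2 ⟨hCK, hCD, fun E hE hCE => ?_⟩, hAC⟩
  rcases hK.subset_or_subset_of_subset_inter hD hE hA (subset_inter hAD.le (hAC.trans hCE.le))
    with h | h
  · exact h
  · by_contra hDE
    have hCE' := hmax E (mem_filter.2 ⟨hE, hAC.trans hCE.le, h.ssubset_of_not_superset hDE⟩)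
    exact (card_lt_card hCE).not_ge hCE'

theorem one_lt_card_children (hK : IsHierarchy K) (hs : ∀ x, {x} ∈ K) (hD : D ∈ K)
    (hcard : 1 < #D) : 1 < #(children K D) := by
  have hsingle : ∀ x ∈ D, {x} ⊂ D := fun x hx =>
    Finset.ssubset_iff_subset_ne.2 ⟨singleton_subset_iff.2 hx, by rintro rfl; simp at hcard⟩
  obtain ⟨x, hx⟩ := card_pos.1 (zero_lt_one.trans hcard)
  obtain ⟨C, hC, hxC⟩ := hK.exists_child_superset (hs x) hD (hsingle x hx)
  obtain ⟨y, hyD, hyC⟩ := exists_of_ssubset (mem_children.1 hC).2.1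
  obtain ⟨C', hC', hyC'⟩ := hK.exists_child_superset (hs y) hD (hsingle y hyD)
  exact one_lt_card.2 ⟨C, hC, C', hC', fun h => hyC (h ▸ singleton_subset_iff.1 hyC')⟩

theorem disjoint_or_subset_of_isChild (hK : IsHierarchy K) (hA : A ∈ K) (hE : E ∈ K)
    (hAD : IsChild K A D) : Disjoint A E ∨ E ⊆ A ∨ D ⊆ E := by
  rcases compatible_iff.1 (hK.compatible hA hE) with h | h | h
  · exact Or.inl h
  · rcases h.eq_or_ssubset with rfl | h
    · exact Or.inr (Or.inl subset_rfl)
    · exact Or.inr (Or.inr (hAD.2 E hE h))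
  · exact Or.inr (Or.inl h)

theorem disjoint_of_isChild (hK : IsHierarchy K) (hA : A ∈ K) (hB : B ∈ K)
    (hAD : IsChild K A D) (hBD : IsChild K B D) (hne : A ≠ B) : Disjoint A B := by
  rcases hK.disjoint_or_subset_of_isChild hA hB hAD with h | hBA | h
  · exact h
  · rcases hK.disjoint_or_subset_of_isChild hB hA hBD with h | hAB | h
    · exact h.symm
    · exact absurd (subset_antisymm hAB hBA) hne
    · exact absurd h hAD.1.not_superset
  · exact absurd h hBD.1.not_superset

theorem compatible_union_of_isChild (hK : IsHierarchy K) (hA : A ∈ K) (hB : B ∈ K)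
    (hAD : IsChild K A D) (hBD : IsChild K B D) (hE : E ∈ K) : Compatible (A ∪ B) E := by
  rw [compatible_iff]
  have hABD : A ∪ B ⊆ D := union_subset hAD.1.le hBD.1.le
  rcases hK.disjoint_or_subset_of_isChild hA hE hAD with hAE | hEA | hDE
  · rcases hK.disjoint_or_subset_of_isChild hB hE hBD with hBE | hEB | hDE
    · exact Or.inl (disjoint_union_left.2 ⟨hAE, hBE⟩)
    · exact Or.inr (Or.inr (hEB.trans subset_union_right))
    · exact Or.inr (Or.inl (hABD.trans hDE))
  · exact Or.inr (Or.inr (hEA.trans subset_union_left))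
  · exact Or.inr (Or.inl (hABD.trans hDE))

theorem mem_of_maximal (hK : Maximal IsHierarchy K) (hB : B ≠ ∅)
    (h : ∀ E ∈ K, Compatible B E) : B ∈ K :=
  hK.2 (hK.1.insert hB h) (subset_insert B K) (mem_insert_self B K)

theorem card_children_le_two_of_maximal (hK : Maximal IsHierarchy K) (D : Finset α) :
    #(children K D) ≤ 2 := by
  by_contra! h
  obtain ⟨A₁, h₁, A₂, h₂, A₃, h₃, h₁₂, h₁₃, h₂₃⟩ := two_lt_card.1 h
  rw [mem_children] at h₁ h₂ h₃
  have hA₂ := hK.1.nonempty_of_mem h₂.1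
  have hA₃ := hK.1.nonempty_of_mem h₃.1
  have d₁₂ := hK.1.disjoint_of_isChild h₁.1 h₂.1 h₁.2 h₂.2 h₁₂
  have d₁₃ := hK.1.disjoint_of_isChild h₁.1 h₃.1 h₁.2 h₃.2 h₁₃
  have d₂₃ := hK.1.disjoint_of_isChild h₂.1 h₃.1 h₂.2 h₃.2 h₂₃
  have hB : A₁ ∪ A₂ ∈ K := mem_of_maximal hK (hA₂.mono subset_union_right).ne_empty
    fun E hE => hK.1.compatible_union_of_isChild h₁.1 h₂.1 h₁.2 h₂.2 hE
  have hA₁B : A₁ ⊂ A₁ ∪ A₂ := left_lt_sup.2 fun h => hA₂.ne_empty (d₁₂.symm.eq_bot_of_le h)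
  have hA₃B : A₃ ⊆ A₁ ∪ A₂ := h₃.2.1.le.trans (h₁.2.2 _ hB hA₁B)
  exact hA₃.ne_empty ((disjoint_union_right.2 ⟨d₁₃.symm, d₂₃.symm⟩).eq_bot_of_le hA₃B)

theorem card_eq_of_maximal (hK : Maximal IsHierarchy K) : #K = 2 * Fintype.card α - 1 := by
  have hs : ∀ x, {x} ∈ K := fun x =>
    mem_of_maximal hK (singleton_ne_empty x) fun E _ => compatible_singleton x E
  have hleaves : {D ∈ K | #D = 1} = univ.map ⟨singleton, singleton_injective⟩ := by
    ext D
    simp only [mem_filter, mem_map, mem_univ, true_and, Function.Embedding.coeFn_mk, card_eq_one]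
    constructor
    · rintro ⟨-, x, rfl⟩
      exact ⟨x, rfl⟩
    · rintro ⟨x, rfl⟩
      exact ⟨hs x, x, rfl⟩
  have hbranching : ∑ D ∈ K, #(children K D) = #{D ∈ K | ¬#D = 1} * 2 := by
    rw [← sum_filter_add_sum_filter_not K (#· = 1), sum_eq_zero fun D hD =>
      by rw [hK.1.children_eq_empty_of_card_le_one (mem_filter.1 hD).2.le, card_empty]]
    refine (zero_add _).trans (sum_const_nat fun D hD => ?_)
    obtain ⟨hDK, hD1⟩ := mem_filter.1 hD
    have hDpos := (hK.1.nonempty_of_mem hDK).card_pos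
    exact le_antisymm (card_children_le_two_of_maximal hK D)
      (hK.1.one_lt_card_children hs hDK (by omega))
  have hedges := hK.1.card_erase_univ
  rw [card_erase_of_mem hK.1.2.1, hbranching] at hedges
  have hsplit := card_filter_add_card_filter_not (s := K) (#· = 1)
  rw [hleaves, card_map, card_univ] at hsplit
  have hKpos := card_pos.2 ⟨univ, hK.1.2.1⟩
  omega

end IsHierarchy

theorem compatible_bureaucratic_general {α : Type*} [Fintype α] [DecidableEq α]
    (H₀ : Finset (Finset α)) (hH₀ : IsHierarchy H₀) :
    IsBureaucratic {C : Finset α | C ≠ ∅ ∧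
      ∀ C' ∈ H₀, C ∩ C' = ∅ ∨ C ∩ C' = C ∨ C ∩ C' = C'} := by
  refine ⟨⟨univ, fun h => hH₀.1 (h ▸ hH₀.2.1), fun C' _ => Or.inr (Or.inr (univ_inter C'))⟩,
    fun h => h.1 rfl, fun H hHC hH => ?_⟩
  have hHH₀ : IsHierarchy (H ∪ H₀) := hH₀.union hH.1 hH.2.2 fun A hA => (hHC hA).2
  obtain ⟨K, hHK, hK⟩ := Finite.exists_le_maximal hHH₀
  refine ⟨K, subset_union_left.trans hHK, fun B hB => ⟨?_, fun C' hC' => ?_⟩,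
    hK.1, IsHierarchy.card_eq_of_maximal hK⟩
  · exact fun h => hK.1.1 (h ▸ hB)
  · exact hK.1.compatible hB (hHK (mem_union_right H hC'))

/-- The collection of all nonempty subsets of `X` compatible with every cluster of a
hierarchy `H₀` (which contains all trivial clusters) is bureaucratic. -/
theorem compatible_bureaucratic {α : Type*} [Fintype α] [DecidableEq α] [Nonempty α]
    (H₀ : Finset (Finset α)) (hH₀ : IsHierarchy H₀)
    (hsing : ∀ x : α, {x} ∈ H₀) (huniv : Finset.univ ∈ H₀) :
    IsBureaucratic {C : Finset α | C ≠ ∅ ∧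
      ∀ C' ∈ H₀, C ∩ C' = ∅ ∨ C ∩ C' = C ∨ C ∩ C' = C'} :=
  compatible_bureaucratic_general H₀ hH₀
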